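/- For every M > 0, C > 0 and α ∈ (0,1), there exist constants A > 1, λ > 0 and δ > 0 such that, with w(y) = A - exp(-λ(y+M)), for all y ∈ [-M, M]: w(y) > 0, w'(y) = λ·exp(-λ(y+M)) > 0, w''(y) = -λ²·exp(-λ(y+M)) < 0, and ((1-α)/2)·w''(y)/w(y) + 2C·w'(y)/w(y) + (w'(y)/w(y))² ≤ -δ. -/

import Mathlib

/-- Key construction in the comparison theorem for quadratic BDSDEs: for `M, C > 0` and
`α ∈ (0,1)` there are `A > 1`, `λ > 0` and `δ > 0` such that `w(y) = A - exp(-λ(y+M))`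
satisfies `w > 0`, `w' > 0`, `w'' < 0` on `[-M,M]` and
`((1-α)/2)w''/w + 2Cw'/w + (w'/w)² ≤ -δ` there. -/
theorem stmt_9 (M C α : ℝ) (hM : 0 < M) (hC : 0 < C) (hα : α ∈ Set.Ioo (0:ℝ) 1) :
    ∃ A lam δ : ℝ, 1 < A ∧ 0 < lam ∧ 0 < δ ∧
      ∀ y ∈ Set.Icc (-M) M,
        0 < A - Real.exp (-(lam * (y + M))) ∧
        0 < lam * Real.exp (-(lam * (y + M))) ∧
        -(lam ^ 2 * Real.exp (-(lam * (y + M)))) < 0 ∧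
        (1 - α) / 2 * (-(lam ^ 2 * Real.exp (-(lam * (y + M)))))
            / (A - Real.exp (-(lam * (y + M))))
          + 2 * C * (lam * Real.exp (-(lam * (y + M))))
            / (A - Real.exp (-(lam * (y + M))))
          + ((lam * Real.exp (-(lam * (y + M)))) / (A - Real.exp (-(lam * (y + M))))) ^ 2
          ≤ -δ := by
  obtain ⟨hα0, hα1⟩ := hα
  have h1α : 0 < 1 - α := by linarith
  obtain ⟨A, hA⟩ : ∃ A : ℝ, A = 1 + 4 / (1 - α) := ⟨_, rfl⟩
  obtain ⟨lam, hlam⟩ : ∃ lam : ℝ, lam = 16 * C / (1 - α) := ⟨_, rfl⟩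
  have hA1 : 1 < A := by
    have : 0 < 4 / (1 - α) := by positivity
    linarith
  have hlam0 : 0 < lam := by rw [hlam]; positivity
  have hA0 : 0 < A := by linarith
  obtain ⟨δ, hδ⟩ : ∃ δ : ℝ, δ = 2 * C * (lam * Real.exp (-(lam * (2 * M))) / A) := ⟨_, rfl⟩
  refine ⟨A, lam, δ, hA1, hlam0, by rw [hδ]; positivity, ?_⟩
  rintro y ⟨hy1, hy2⟩
  obtain ⟨E, hE⟩ : ∃ E : ℝ, E = Real.exp (-(lam * (y + M))) := ⟨_, rfl⟩
  have hE0 : 0 < E := hE ▸ Real.exp_pos _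
  have hE1 : E ≤ 1 := by
    rw [hE]
    apply Real.exp_le_one_iff.mpr
    have : 0 ≤ y + M := by linarith
    nlinarith
  have hElo : Real.exp (-(lam * (2 * M))) ≤ E := by
    rw [hE]
    apply Real.exp_le_exp.mpr
    have : y + M ≤ 2 * M := by linarith
    nlinarith
  have hw1 : 4 / (1 - α) ≤ A - E := by
    have : A - 1 = 4 / (1 - α) := by rw [hA]; ring
    linarith
  have hw0 : 0 < A - E := by
    have : 0 < 4 / (1 - α) := by positivity
    linarith
  have hwA : A - E ≤ A := by linarith
  rw [← hE]
  refine ⟨hw0, by positivity, neg_lt_zero.mpr (by positivity), ?_⟩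
  obtain ⟨t, ht⟩ : ∃ t : ℝ, t = lam * E / (A - E) := ⟨_, rfl⟩
  have ht0 : 0 < t := by rw [ht]; positivity
  -- t ≤ 4C
  have htle : t ≤ 4 * C := by
    rw [ht, div_le_iff₀ hw0]
    have h1 : lam * E ≤ lam := by nlinarith
    have h2 : 4 * C * (4 / (1 - α)) ≤ 4 * C * (A - E) := by
      apply mul_le_mul_of_nonneg_left hw1 (by positivity)
    have h3 : lam = 4 * C * (4 / (1 - α)) := by
      field_simp [hlam]
      rw [hlam]; field_simp; norm_num
    linarith
  -- t ≥ lam * exp(-(lam*2M)) / A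
  have htge : lam * Real.exp (-(lam * (2 * M))) / A ≤ t := by
    rw [ht]
    apply div_le_div₀ (by positivity) _ hw0 hwA
    exact mul_le_mul_of_nonneg_left hElo (le_of_lt hlam0)
  -- rewrite LHS as t * (2C + t - (1-α)/2 * lam)
  have hkey : (1 - α) / 2 * (-(lam ^ 2 * E)) / (A - E)
      + 2 * C * (lam * E) / (A - E) + (lam * E / (A - E)) ^ 2
      = t * (2 * C + t - (1 - α) / 2 * lam) := by
    rw [ht]
    field_simp
    ring
  rw [hkey]
  have hbr : 2 * C + t - (1 - α) / 2 * lam ≤ -(2 * C) := by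
    have : (1 - α) / 2 * lam = 8 * C := by
      rw [hlam]; field_simp; ring
    linarith
  have h1 : t * (2 * C + t - (1 - α) / 2 * lam) ≤ t * (-(2 * C)) :=
    mul_le_mul_of_nonneg_left hbr (le_of_lt ht0)
  have h2 : t * (-(2 * C)) ≤ -δ := by
    rw [hδ]
    nlinarith
  linarith
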